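/- If all channel rates γ_{jk} and the capacity C are integers, then the single-shot problem with one overall capacity constraint has an optimal solution in which all allocated rates y_{jk} are integers. -/
import Mathlib

variable {J K : Type*}

section
variable [Fintype J] [Fintype K]

/-- Feasibility for the single-capacity single-shot problem with integer data. -/
def Feasible (γ : J → K → ℕ) (C : ℕ) (x : J → K → Bool) (y : J → K → ℝ) : Prop :=
  (∀ k, ∀ j j' : J, x j k = true → x j' k = true → j = j') ∧
  (∀ j k, 0 ≤ y j k ∧ y j k ≤ (γ j k : ℝ) * (if x j k then 1 else 0)) ∧
  (∑ j, ∑ k, y j k) ≤ (C : ℝ)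

private lemma sum2_eq (f : J → K → ℝ) :
    ∑ j, ∑ k, f j k = ∑ p : J × K, f p.1 p.2 :=
  (Fintype.sum_prod_type (fun p : J × K => f p.1 p.2)).symm

open Classical in
private noncomputable def fracSet (y : J → K → ℝ) : Finset (J × K) :=
  Finset.univ.filter (fun p => ¬∃ n : ℕ, y p.1 p.2 = (n : ℝ))

private lemma mem_fracSet {y : J → K → ℝ} {p : J × K} :
    p ∈ fracSet y ↔ ¬∃ n : ℕ, y p.1 p.2 = (n : ℝ) := by
  classical
  simp [fracSet]

private lemma frac_facts {γ : J → K → ℕ} {C : ℕ} {x : J → K → Bool} {y : J → K → ℝ}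
    (h : Feasible γ C x y) {j : J} {k : K} (hp : ¬∃ n : ℕ, y j k = (n : ℝ)) :
    x j k = true ∧ 0 < y j k ∧ (⌊y j k⌋ : ℝ) < y j k ∧ 0 ≤ ⌊y j k⌋ ∧
      y j k < (⌈y j k⌉ : ℝ) ∧ (⌈y j k⌉ : ℝ) ≤ (γ j k : ℝ) := by
  obtain ⟨-, hb, -⟩ := h
  have h0 := (hb j k).1
  have h1 := (hb j k).2
  have hx : x j k = true := by
    by_contra hx
    have hy0 : y j k ≤ 0 := by simpa [hx] using h1
    exact hp ⟨0, by simpa using le_antisymm hy0 h0⟩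
  have h1' : y j k ≤ (γ j k : ℝ) := by simpa [hx] using h1
  have hfl : 0 ≤ ⌊y j k⌋ := Int.floor_nonneg.2 h0
  have hflt : (⌊y j k⌋ : ℝ) < y j k := by
    rcases lt_or_eq_of_le (Int.floor_le (y j k)) with h | h
    · exact h
    · exact absurd ⟨⌊y j k⌋.toNat, by
        have h2 : ((⌊y j k⌋.toNat : ℕ) : ℝ) = ((⌊y j k⌋ : ℤ) : ℝ) := by
          exact_mod_cast congrArg (fun z : ℤ => (z : ℝ)) (Int.toNat_of_nonneg hfl)
        rw [h2]; exact h.symm⟩ hp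
  have hcl : 0 ≤ ⌈y j k⌉ := Int.ceil_nonneg h0
  have hclt : y j k < (⌈y j k⌉ : ℝ) := by
    rcases lt_or_eq_of_le (Int.le_ceil (y j k)) with h | h
    · exact h
    · exact absurd ⟨⌈y j k⌉.toNat, by
        have h2 : ((⌈y j k⌉.toNat : ℕ) : ℝ) = ((⌈y j k⌉ : ℤ) : ℝ) := by
          exact_mod_cast congrArg (fun z : ℤ => (z : ℝ)) (Int.toNat_of_nonneg hcl)
        rw [h2]; exact h⟩ hp
  have hcle : (⌈y j k⌉ : ℝ) ≤ (γ j k : ℝ) := by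
    have : ⌈y j k⌉ ≤ (γ j k : ℤ) := Int.ceil_le.2 (by exact_mod_cast h1')
    exact_mod_cast this
  exact ⟨hx, lt_of_le_of_lt (by exact_mod_cast hfl) hflt, hflt, hfl, hclt, hcle⟩

private lemma int_cast_nat {z : ℤ} (hz : 0 ≤ z) : ∃ n : ℕ, (z : ℝ) = (n : ℝ) :=
  ⟨z.toNat, by exact_mod_cast (Int.toNat_of_nonneg hz).symm⟩

private lemma shift_step (R : J → ℝ) (hR : ∀ j, 0 < R j) {γ : J → K → ℕ} {C : ℕ}
    {x : J → K → Bool} {y : J → K → ℝ} (hF : Feasible γ C x y)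
    {a b : J × K} (ha : a ∈ fracSet y) (hb : b ∈ fracSet y) (hab : a ≠ b)
    (hr : R a.1 ≤ R b.1) :
    ∃ y', Feasible γ C x y' ∧ (fracSet y').card < (fracSet y).card ∧
      (∑ j, ∑ k, y j k / R j) ≤ ∑ j, ∑ k, y' j k / R j := by
  classical
  obtain ⟨hxa, hya, hfla, hfl0a, hca, hcga⟩ := frac_facts hF (mem_fracSet.1 ha)
  obtain ⟨hxb, hyb, hflb, hfl0b, hcb, hcgb⟩ := frac_facts hF (mem_fracSet.1 hb)
  obtain ⟨a1, a2⟩ := a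
  obtain ⟨b1, b2⟩ := b
  simp only at hxa hya hfla hfl0a hca hcga hxb hyb hflb hfl0b hcb hcgb hr
  have hne : ¬(a1 = b1 ∧ a2 = b2) := fun h => hab (by rw [h.1, h.2])
  have hne' : ¬(b1 = a1 ∧ b2 = a2) := fun h => hab (by rw [h.1, h.2])
  set fa := y a1 a2 with hfadef
  set fb := y b1 b2 with hfbdef
  have hfl0a' : (0 : ℝ) ≤ (⌊fa⌋ : ℝ) := by exact_mod_cast hfl0a
  have hfl0b' : (0 : ℝ) ≤ (⌊fb⌋ : ℝ) := by exact_mod_cast hfl0b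
  set ε := min (fb - (⌊fb⌋ : ℝ)) ((⌈fa⌉ : ℝ) - fa) with hεdef
  have hε0 : 0 < ε := lt_min (by linarith) (by linarith)
  have hε1 : ε ≤ fb - (⌊fb⌋ : ℝ) := min_le_left _ _
  have hε2 : ε ≤ (⌈fa⌉ : ℝ) - fa := min_le_right _ _
  set y' : J → K → ℝ := fun j k =>
    if (j, k) = (a1, a2) then fa + ε else if (j, k) = (b1, b2) then fb - ε else y j k with hy'
  have hval : ∀ p : J × K, y' p.1 p.2
      = y p.1 p.2 + (if p = (a1, a2) then ε else 0) - (if p = (b1, b2) then ε else 0) := by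
    intro p
    obtain ⟨p1, p2⟩ := p
    by_cases h1 : p1 = a1 ∧ p2 = a2
    · obtain ⟨rfl, rfl⟩ := h1
      simp [hy', Prod.mk.injEq, hne, ← hfadef]
    · by_cases h2 : p1 = b1 ∧ p2 = b2
      · obtain ⟨rfl, rfl⟩ := h2
        simp [hy', Prod.mk.injEq, h1, ← hfbdef]
      · simp [hy', Prod.mk.injEq, h1, h2]
  have hsum : ∀ w : J × K → ℝ, ∑ p : J × K, y' p.1 p.2 * w p
      = (∑ p : J × K, y p.1 p.2 * w p) + ε * w (a1, a2) - ε * w (b1, b2) := by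
    intro w
    have hpt : ∀ p : J × K, y' p.1 p.2 * w p
        = y p.1 p.2 * w p + (if p = (a1, a2) then ε * w p else 0)
          - (if p = (b1, b2) then ε * w p else 0) := by
      intro p
      rw [hval p]
      by_cases h1 : p = (a1, a2) <;> by_cases h2 : p = (b1, b2) <;>
        simp [h1, h2, Prod.mk.injEq, hne, hne'] <;> ring
    rw [Finset.sum_congr rfl fun p _ => hpt p, Finset.sum_sub_distrib, Finset.sum_add_distrib,
      Finset.sum_ite_eq', Finset.sum_ite_eq']
    simp
  have htot : ∑ j, ∑ k, y' j k = ∑ j, ∑ k, y j k := by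
    rw [sum2_eq, sum2_eq (f := y)]
    have h1 := hsum (fun _ => 1)
    simp only [mul_one] at h1
    rw [h1]; ring
  have hobj : ∑ j, ∑ k, y j k / R j ≤ ∑ j, ∑ k, y' j k / R j := by
    rw [sum2_eq (f := fun j k => y j k / R j), sum2_eq (f := fun j k => y' j k / R j)]
    simp only [div_eq_mul_inv]
    rw [hsum (fun p => (R p.1)⁻¹)]
    have h1 : (R b1)⁻¹ ≤ (R a1)⁻¹ := inv_anti₀ (hR a1) hr
    have h2 : ε * (R b1)⁻¹ ≤ ε * (R a1)⁻¹ := mul_le_mul_of_nonneg_left h1 hε0.le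
    simp only
    linarith
  obtain ⟨hu, hbnd, hcap⟩ := hF
  refine ⟨y', ⟨hu, ?_, ?_⟩, ?_, hobj⟩
  · intro j k
    by_cases h1 : j = a1 ∧ k = a2
    · obtain ⟨rfl, rfl⟩ := h1
      have hv : y' j k = fa + ε := by simp [hy']
      rw [hv, hxa]
      refine ⟨by linarith, ?_⟩
      simp only [if_true]
      linarith
    · by_cases h2 : j = b1 ∧ k = b2
      · obtain ⟨rfl, rfl⟩ := h2
        have hv : y' j k = fb - ε := by simp [hy', Prod.mk.injEq, h1]
        rw [hv, hxb]
        refine ⟨by linarith, ?_⟩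
        simp only [if_true]
        linarith
      · have hv : y' j k = y j k := by simp [hy', Prod.mk.injEq, h1, h2]
        rw [hv]; exact hbnd j k
  · rw [htot]; exact hcap
  · apply Finset.card_lt_card
    have hsub : fracSet y' ⊆ fracSet y := by
      intro p hp
      obtain ⟨p1, p2⟩ := p
      by_cases h1 : p1 = a1 ∧ p2 = a2
      · obtain ⟨rfl, rfl⟩ := h1; exact ha
      · by_cases h2 : p1 = b1 ∧ p2 = b2
        · obtain ⟨rfl, rfl⟩ := h2; exact hb
        · rw [mem_fracSet] at hp ⊢
          have he : y' p1 p2 = y p1 p2 := by simp [hy', Prod.mk.injEq, h1, h2]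
          intro hn; obtain ⟨n, hn⟩ := hn
          exact hp ⟨n, by rw [he]; exact hn⟩
    rw [Finset.ssubset_iff_of_subset hsub]
    rcases min_cases (fb - (⌊fb⌋ : ℝ)) ((⌈fa⌉ : ℝ) - fa) with ⟨hm, -⟩ | ⟨hm, -⟩
    · refine ⟨(b1, b2), hb, ?_⟩
      rw [mem_fracSet, not_not]
      have hv : y' b1 b2 = (⌊fb⌋ : ℝ) := by
        have hvv : y' b1 b2 = fb - ε := by simp [hy', Prod.mk.injEq, hne']
        rw [hvv, hεdef, hm]; ring
      rw [hv]
      exact int_cast_nat hfl0b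
    · refine ⟨(a1, a2), ha, ?_⟩
      rw [mem_fracSet, not_not]
      have hv : y' a1 a2 = (⌈fa⌉ : ℝ) := by
        have hvv : y' a1 a2 = fa + ε := by simp [hy']
        rw [hvv, hεdef, hm]; ring
      rw [hv]
      exact int_cast_nat (Int.ceil_nonneg hya.le)

private lemma fix_one (R : J → ℝ) (hR : ∀ j, 0 < R j) {γ : J → K → ℕ} {C : ℕ}
    {x : J → K → Bool} {y : J → K → ℝ} (hF : Feasible γ C x y)
    {a : J × K} (ha : fracSet y = {a}) :
    ∃ n : J → K → ℕ, Feasible γ C x (fun j k => (n j k : ℝ)) ∧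
      (∑ j, ∑ k, y j k / R j) ≤ ∑ j, ∑ k, (n j k : ℝ) / R j := by
  classical
  obtain ⟨a1, a2⟩ := a
  have hamem : ((a1, a2) : J × K) ∈ fracSet y := by rw [ha]; exact Finset.mem_singleton_self _
  obtain ⟨hxa, hya, hfla, hfl0a, hca, hcga⟩ := frac_facts hF (mem_fracSet.1 hamem)
  simp only at hxa hya hfla hfl0a hca hcga
  obtain ⟨hu, hbnd, hcap⟩ := hF
  set m : J × K → ℕ :=
    fun p => if h : ∃ n : ℕ, y p.1 p.2 = (n : ℝ) then Classical.choose h else 0 with hm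
  have hmval : ∀ p : J × K, p ≠ (a1, a2) → y p.1 p.2 = (m p : ℝ) := by
    intro p hp
    have hpm : p ∉ fracSet y := by rw [ha]; simpa using hp
    rw [mem_fracSet, not_not] at hpm
    simp only [hm, dif_pos hpm]
    exact Classical.choose_spec hpm
  set S : ℕ := ∑ p ∈ Finset.univ.erase ((a1, a2) : J × K), m p with hS
  have hSr : ∑ p ∈ Finset.univ.erase ((a1, a2) : J × K), y p.1 p.2 = (S : ℝ) := by
    rw [hS]
    push_cast
    exact Finset.sum_congr rfl fun p hp => hmval p (Finset.ne_of_mem_erase hp)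
  have htot : y a1 a2 + (S : ℝ) = ∑ j, ∑ k, y j k := by
    rw [sum2_eq (f := y), ← hSr]
    exact Finset.add_sum_erase Finset.univ (fun p : J × K => y p.1 p.2)
      (a := ((a1, a2) : J × K)) (Finset.mem_univ _)
  have hcap' : y a1 a2 + (S : ℝ) ≤ (C : ℝ) := by rw [htot]; exact hcap
  have hSCn : S ≤ C := by exact_mod_cast (by linarith : (S : ℝ) ≤ (C : ℝ))
  set v : ℕ := min (γ a1 a2) (C - S) with hv
  have hvr : (v : ℝ) = min ((γ a1 a2 : ℕ) : ℝ) ((C : ℝ) - (S : ℝ)) := by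
    rw [hv, Nat.cast_min, Nat.cast_sub hSCn]
  have hvle : (v : ℝ) ≤ (C : ℝ) - (S : ℝ) := by rw [hvr]; exact min_le_right _ _
  have hyav : y a1 a2 ≤ (v : ℝ) := by
    rw [hvr]
    exact le_min (by linarith) (by linarith)
  set n : J → K → ℕ := fun j k => if (j, k) = ((a1, a2) : J × K) then v else m (j, k) with hn
  have hnval : ∀ p : J × K, p ≠ (a1, a2) → n p.1 p.2 = m p := by
    intro p hp
    obtain ⟨p1, p2⟩ := p
    simp only [hn]
    rw [if_neg hp]
  have hna : n a1 a2 = v := by simp [hn]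
  have hpt : ∀ j k, y j k ≤ (n j k : ℝ) := by
    intro j k
    by_cases h1 : ((j, k) : J × K) = (a1, a2)
    · obtain ⟨rfl, rfl⟩ := Prod.mk.injEq .. ▸ h1
      rw [hna]; exact hyav
    · rw [hnval (j, k) h1, ← hmval (j, k) h1]
  have hntot : ∑ j, ∑ k, (n j k : ℝ) = (v : ℝ) + (S : ℝ) := by
    rw [sum2_eq (f := fun j k => (n j k : ℝ))]
    rw [← Finset.add_sum_erase Finset.univ (fun p : J × K => (n p.1 p.2 : ℝ)) (Finset.mem_univ ((a1, a2) : J × K))]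
    simp only [hna]
    congr 1
    rw [hS]
    push_cast
    exact Finset.sum_congr rfl fun p hp => by
      rw [hnval p (Finset.ne_of_mem_erase hp)]
  refine ⟨n, ⟨hu, ?_, ?_⟩, ?_⟩
  · intro j k
    dsimp only
    refine ⟨by positivity, ?_⟩
    by_cases h1 : ((j, k) : J × K) = (a1, a2)
    · obtain ⟨rfl, rfl⟩ := Prod.mk.injEq .. ▸ h1
      rw [hna, hxa]
      simp only [if_true, mul_one]
      rw [hv, Nat.cast_min]
      exact min_le_left _ _
    · rw [hnval (j, k) h1, ← hmval (j, k) h1]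
      exact (hbnd j k).2
  · dsimp only
    rw [hntot]; linarith
  · apply Finset.sum_le_sum
    intro j _
    apply Finset.sum_le_sum
    intro k _
    have hRj := hR j
    gcongr
    exact hpt j k

private lemma round_all (R : J → ℝ) (hR : ∀ j, 0 < R j) (γ : J → K → ℕ) (C : ℕ) :
    ∀ m (x : J → K → Bool) (y : J → K → ℝ), (fracSet y).card ≤ m → Feasible γ C x y →
      ∃ n : J → K → ℕ, Feasible γ C x (fun j k => (n j k : ℝ)) ∧
        (∑ j, ∑ k, y j k / R j) ≤ ∑ j, ∑ k, (n j k : ℝ) / R j := by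
  intro m
  induction m with
  | zero =>
    intro x y hcard hF
    have hempty : fracSet y = ∅ := Finset.card_eq_zero.1 (le_antisymm hcard (Nat.zero_le _))
    have hall : ∀ j k, ∃ n : ℕ, y j k = (n : ℝ) := by
      intro j k
      by_contra h
      have hmem : ((j, k) : J × K) ∈ fracSet y := mem_fracSet.2 h
      simp [hempty] at hmem
    choose n hn using fun j => fun k => hall j k
    refine ⟨n, ?_, ?_⟩
    · have hyn : (fun j k => (n j k : ℝ)) = y := by funext j k; exact (hn j k).symm
      rw [hyn]; exact hF
    · apply le_of_eq
      refine Finset.sum_congr rfl fun j _ => Finset.sum_congr rfl fun k _ => ?_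
      rw [hn j k]
  | succ m IH =>
    intro x y hcard hF
    by_cases hc : (fracSet y).card ≤ m
    · exact IH x y hc hF
    · by_cases h2 : ∃ a ∈ fracSet y, ∃ b ∈ fracSet y, a ≠ b
      · obtain ⟨a, ha, b, hb, hab⟩ := h2
        rcases le_total (R a.1) (R b.1) with hr | hr
        · obtain ⟨y', hF', hcard', hobj'⟩ := shift_step R hR hF ha hb hab hr
          obtain ⟨n, hFn, hobj''⟩ := IH x y' (by omega) hF'
          exact ⟨n, hFn, le_trans hobj' hobj''⟩
        · obtain ⟨y', hF', hcard', hobj'⟩ := shift_step R hR hF hb ha (Ne.symm hab) hr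
          obtain ⟨n, hFn, hobj''⟩ := IH x y' (by omega) hF'
          exact ⟨n, hFn, le_trans hobj' hobj''⟩
      · push_neg at h2
        have hone : (fracSet y).card ≤ 1 :=
          Finset.card_le_one.2 (fun a ha b hb => h2 a ha b hb)
        obtain ⟨a, ha⟩ := Finset.card_eq_one.1 (le_antisymm hone (by omega))
        exact fix_one R hR hF ha

/-- If all channel rates and the capacity are integers, the single-capacity
single-shot problem has an optimal solution with all allocated rates integral. -/
theorem exists_integral_optimal
    (R : J → ℝ) (hR : ∀ j, 0 < R j)
    (γ : J → K → ℕ) (C : ℕ) :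
    ∃ x y, Feasible γ C x y ∧ (∀ j k, ∃ n : ℕ, y j k = (n : ℝ)) ∧
      ∀ x' y', Feasible γ C x' y' →
        (∑ j, ∑ k, y' j k / R j) ≤ ∑ j, ∑ k, y j k / R j := by
  classical
  have hfeas0 : Feasible γ C (fun _ _ => false)
      (fun j k => (((0 : Fin (γ j k + 1)) : ℕ) : ℝ)) := by
    refine ⟨fun k j j' h => by simp at h, fun j k => ?_, ?_⟩
    · simp
    · simp
  set s : Finset ((J → K → Bool) × (∀ j : J, ∀ k : K, Fin (γ j k + 1))) :=
    Finset.univ.filter (fun p => Feasible γ C p.1 (fun j k => ((p.2 j k : ℕ) : ℝ))) with hs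
  have hs0 : s.Nonempty :=
    ⟨⟨fun _ _ => false, fun j k => 0⟩, by
      rw [hs, Finset.mem_filter]; exact ⟨Finset.mem_univ _, hfeas0⟩⟩
  obtain ⟨p, hps, hmax⟩ := Finset.exists_max_image s
    (fun p => ∑ j, ∑ k, ((p.2 j k : ℕ) : ℝ) / R j) hs0
  have hpF : Feasible γ C p.1 (fun j k => ((p.2 j k : ℕ) : ℝ)) := by
    rw [hs, Finset.mem_filter] at hps; exact hps.2
  refine ⟨p.1, fun j k => ((p.2 j k : ℕ) : ℝ), hpF, fun j k => ⟨(p.2 j k : ℕ), rfl⟩, ?_⟩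
  intro x' y' hF'
  obtain ⟨n, hFn, hobj⟩ := round_all R hR γ C (fracSet y').card x' y' le_rfl hF'
  have hnb : ∀ j k, n j k ≤ γ j k := by
    intro j k
    have h1 := (hFn.2.1 j k).2
    have h2 : (n j k : ℝ) ≤ (γ j k : ℝ) :=
      le_trans h1 (by by_cases h : x' j k <;> simp [h])
    exact_mod_cast h2
  set q : (J → K → Bool) × (∀ j : J, ∀ k : K, Fin (γ j k + 1)) :=
    ⟨x', fun j k => (⟨n j k, Nat.lt_succ_of_le (hnb j k)⟩ : Fin (γ j k + 1))⟩ with hqdef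
  have hq : q ∈ s := by
    rw [hs, Finset.mem_filter]
    exact ⟨Finset.mem_univ _, hFn⟩
  exact le_trans hobj (hmax q hq)
end
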